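/- arXiv:1406.4212 — 3 statements merged into one kernel-verified Lean document; each statement's English description precedes it below -/
import Mathlib

section
/- Let p be an odd prime, q a prime power with p ∤ q, ρ = ord_p(q), β = ν_p(q^ρ - 1), and n = p^α with ρ ≠ 1. Then the number of monic irreducible factors of x^n - 1 over F_q of degree ρ equals (p^{min(α, β)} - 1)/ρ. -/
/-!
Since `X ^ n - 1 = ∏_{d ∣ n} Φ_d` and every irreducible factor of `Φ_d` over `𝔽_q` has degree
`ord_d(q)`, the factors of degree `k` have total degree `Σ_{d ∣ n, ord_d(q) = k} φ(d)`.
For `n = p ^ α`, lifting the order shows `ord_{p^j}(q) = ρ` exactly when `1 ≤ j ≤ β`, and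
`Σ_{j=1}^{m} φ(p ^ j) = p ^ m - 1`.
-/

open Polynomial UniqueFactorizationMonoid

theorem orderOf_eq_orderOf_map_iff {G H : Type*} [Monoid G] [Monoid H] (f : G →* H) (x : G) :
    orderOf x = orderOf (f x) ↔ x ^ orderOf (f x) = 1 :=
  ⟨fun h => h ▸ pow_orderOf_eq_one x,
    fun h => Nat.dvd_antisymm (orderOf_dvd_of_pow_eq_one h) (orderOf_map_dvd f x)⟩

namespace ZMod

theorem natCast_pow_eq_one_iff {a k n : ℕ} (ha : a ≠ 0) :
    (a : ZMod n) ^ k = 1 ↔ n ∣ a ^ k - 1 := by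
  rw [← Nat.cast_pow, ← Nat.cast_one, natCast_eq_natCast_iff, Nat.ModEq.comm,
    Nat.modEq_iff_dvd' (Nat.one_le_pow _ _ (Nat.pos_of_ne_zero ha))]

theorem orderOf_natCast_eq_orderOf_natCast_iff {m n a : ℕ} (hmn : m ∣ n) (ha : a ≠ 0) :
    orderOf (a : ZMod n) = orderOf (a : ZMod m) ↔ n ∣ a ^ orderOf (a : ZMod m) - 1 := by
  have h := orderOf_eq_orderOf_map_iff (castHom hmn (ZMod m)).toMonoidHom (a : ZMod n)
  simp only [RingHom.toMonoidHom_eq_coe, MonoidHom.coe_coe, map_natCast] at h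
  rw [h, natCast_pow_eq_one_iff ha]

theorem orderOf_natCast_pos {a n : ℕ} [NeZero n] (ha : a.Coprime n) :
    0 < orderOf (a : ZMod n) := by
  rw [← coe_unitOfCoprime a ha, orderOf_units]
  exact orderOf_pos _

theorem orderOf_natCast_prime_pow_eq_iff {p q j : ℕ} [Fact p.Prime] (hpq : ¬ p ∣ q)
    (hρ1 : orderOf (q : ZMod p) ≠ 1) :
    orderOf (q : ZMod (p ^ j)) = orderOf (q : ZMod p) ↔
      1 ≤ j ∧ j ≤ padicValNat p (q ^ orderOf (q : ZMod p) - 1) := by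
  have hp : p.Prime := Fact.out
  rcases Nat.eq_zero_or_pos j with rfl | hj
  · have h1 : orderOf (q : ZMod (p ^ 0)) = 1 := by
      rw [pow_zero]
      exact orderOf_eq_one_iff.mpr (Subsingleton.elim _ _)
    rw [h1]
    exact iff_of_false (Ne.symm hρ1) (by omega)
  have hq0 : q ≠ 0 := by rintro rfl; exact hpq (dvd_zero p)
  have hq1 : q ≠ 1 := by rintro rfl; exact hρ1 (by simp)
  have hρ0 := orderOf_natCast_pos (hp.coprime_iff_not_dvd.mpr hpq).symm
  have hqρ : q ^ orderOf (q : ZMod p) - 1 ≠ 0 := by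
    have := Nat.one_lt_pow hρ0.ne' (by omega : 1 < q)
    omega
  rw [orderOf_natCast_eq_orderOf_natCast_iff (dvd_pow_self p hj.ne') hq0,
    padicValNat_dvd_iff_le hqρ]
  exact ⟨fun h => ⟨hj, h⟩, And.right⟩

end ZMod

theorem Nat.sum_Icc_totient_prime_pow {p : ℕ} (hp : p.Prime) (m : ℕ) :
    ∑ j ∈ Finset.Icc 1 m, Nat.totient (p ^ j) = p ^ m - 1 := by
  have h := Nat.sum_totient (p ^ m)
  rw [Nat.divisors_prime_pow hp, Finset.sum_map, Nat.range_succ_eq_Icc_zero,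
    ← Finset.insert_Icc_add_one_left_eq_Icc (Nat.zero_le m), Finset.sum_insert (by simp)] at h
  simp only [Function.Embedding.coeFn_mk, pow_zero, Nat.totient_one, zero_add] at h
  omega

theorem Nat.sum_totient_divisors_prime_pow_orderOf_eq {p q α : ℕ} [Fact p.Prime]
    (hpq : ¬ p ∣ q) (hρ1 : orderOf (q : ZMod p) ≠ 1) :
    ∑ d ∈ (p ^ α).divisors with orderOf (q : ZMod d) = orderOf (q : ZMod p), Nat.totient d =
      p ^ min α (padicValNat p (q ^ orderOf (q : ZMod p) - 1)) - 1 := by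
  have hp : p.Prime := Fact.out
  have hfilter : (Finset.range (α + 1)).filter
      (fun j => orderOf (q : ZMod (p ^ j)) = orderOf (q : ZMod p)) =
      Finset.Icc 1 (min α (padicValNat p (q ^ orderOf (q : ZMod p) - 1))) := by
    ext j
    simp only [Finset.mem_filter, Finset.mem_range, Finset.mem_Icc, le_min_iff,
      ZMod.orderOf_natCast_prime_pow_eq_iff hpq hρ1]
    omega
  rw [Nat.divisors_prime_pow hp, Finset.filter_map, Finset.sum_map,
    ← Nat.sum_Icc_totient_prime_pow hp, ← hfilter]
  rfl

namespace Polynomial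

theorem normalizedFactors_X_pow_sub_one {R : Type*} [Field R] [DecidableEq R] {n : ℕ}
    (hn : n ≠ 0) :
    normalizedFactors (X ^ n - 1 : R[X]) =
      ∑ d ∈ n.divisors, normalizedFactors (cyclotomic d R) := by
  rw [← prod_cyclotomic_eq_X_pow_sub_one (Nat.pos_of_ne_zero hn), Finset.prod_eq_multiset_prod,
    normalizedFactors_multiset_prod _ (by simp [cyclotomic_ne_zero]), Multiset.map_map,
    Finset.sum_eq_multiset_sum]
  rfl

variable {F : Type*} [Field F] [Fintype F] [DecidableEq F]

theorem natDegree_eq_orderOf_of_mem_normalizedFactors_cyclotomic {n : ℕ}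
    (hn : (Fintype.card F).Coprime n) {P : F[X]} (hP : P ∈ normalizedFactors (cyclotomic n F)) :
    P.natDegree = orderOf (Fintype.card F : ZMod n) := by
  obtain ⟨f, hc, hq⟩ := FiniteField.card F (ringChar F)
  have : Fact (ringChar F).Prime := ⟨hc⟩
  have hcn : (ringChar F).Coprime n :=
    Nat.Coprime.coprime_dvd_left (hq ▸ dvd_pow_self _ f.ne_zero) hn
  rw [natDegree_of_mem_normalizedFactors_cyclotomic hq hcn hP, ← orderOf_units,
    ZMod.coe_unitOfCoprime, hq]

theorem card_normalizedFactors_cyclotomic_mul_orderOf {n : ℕ}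
    (hn : (Fintype.card F).Coprime n) :
    Multiset.card (normalizedFactors (cyclotomic n F)) * orderOf (Fintype.card F : ZMod n) =
      n.totient := by
  have hdeg := natDegree_eq_of_degree_eq <| degree_eq_degree_of_associated <|
    prod_normalizedFactors (cyclotomic_ne_zero n F)
  rw [natDegree_cyclotomic, natDegree_multiset_prod _ (zero_notMem_normalizedFactors _),
    Multiset.map_congr rfl fun P hP =>
      natDegree_eq_orderOf_of_mem_normalizedFactors_cyclotomic hn hP,
    Multiset.map_const', Multiset.sum_replicate, smul_eq_mul] at hdeg
  exact hdeg

theorem mul_card_filter_natDegree_normalizedFactors_X_pow_sub_one {n : ℕ} (hn : n ≠ 0)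
    (hqn : (Fintype.card F).Coprime n) (k : ℕ) :
    k * Multiset.card ((normalizedFactors (X ^ n - 1 : F[X])).filter (·.natDegree = k)) =
      ∑ d ∈ n.divisors with orderOf (Fintype.card F : ZMod d) = k, d.totient := by
  rw [normalizedFactors_X_pow_sub_one hn, ← Multiset.countP_eq_card_filter,
    ← Multiset.coe_countPAddMonoidHom, map_sum, Finset.mul_sum, Finset.sum_filter]
  refine Finset.sum_congr rfl fun d hd => ?_
  have hqd := hqn.coprime_dvd_right (Nat.dvd_of_mem_divisors hd)
  have hdeg : ∀ P ∈ normalizedFactors (cyclotomic d F),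
      P.natDegree = orderOf (Fintype.card F : ZMod d) := fun P hP =>
    natDegree_eq_orderOf_of_mem_normalizedFactors_cyclotomic hqd hP
  rw [Multiset.coe_countPAddMonoidHom, Multiset.countP_eq_card_filter]
  split_ifs with hk
  · rw [Multiset.filter_eq_self.mpr fun P hP => (hdeg P hP).trans hk, ← hk, mul_comm,
      card_normalizedFactors_cyclotomic_mul_orderOf hqd]
  · rw [Multiset.filter_eq_nil.mpr fun P hP h => hk ((hdeg P hP).symm.trans h),
      Multiset.card_zero, mul_zero]

end Polynomial

theorem stmt_12_general {F : Type*} [Field F] [Fintype F] [DecidableEq F]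
    (p α : ℕ) (hp : p.Prime)
    (hpq : ¬ p ∣ Fintype.card F) (ρ β : ℕ)
    (hρ : ρ = orderOf ((Fintype.card F : ZMod p)))
    (hβ : β = padicValNat p ((Fintype.card F) ^ ρ - 1))
    (hρ1 : ρ ≠ 1) :
    Multiset.card ((normalizedFactors (X ^ (p ^ α) - 1 : F[X])).filter
        (fun P => P.natDegree = ρ))
      = (p ^ (min α β) - 1) / ρ := by
  have : Fact p.Prime := ⟨hp⟩
  have hqp : (Fintype.card F).Coprime p := (hp.coprime_iff_not_dvd.mpr hpq).symm
  have hρ0 : 0 < ρ := hρ ▸ ZMod.orderOf_natCast_pos hqp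
  have hcount := mul_card_filter_natDegree_normalizedFactors_X_pow_sub_one (F := F)
    (pow_ne_zero α hp.ne_zero) (hqp.pow_right α) ρ
  rw [hρ, Nat.sum_totient_divisors_prime_pow_orderOf_eq hpq (hρ ▸ hρ1), ← hρ, ← hβ] at hcount
  exact (Nat.div_eq_of_eq_mul_right hρ0 hcount.symm).symm

theorem stmt_12 {F : Type*} [Field F] [Fintype F] [DecidableEq F]
    (p α : ℕ) (hp : p.Prime) (hodd : Odd p)
    (hpq : ¬ p ∣ Fintype.card F) (ρ β : ℕ)
    (hρ : ρ = orderOf ((Fintype.card F : ZMod p)))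
    (hβ : β = padicValNat p ((Fintype.card F) ^ ρ - 1))
    (hρ1 : ρ ≠ 1) :
    Multiset.card ((normalizedFactors (X ^ (p ^ α) - 1 : F[X])).filter
        (fun P => P.natDegree = ρ))
      = (p ^ (min α β) - 1) / ρ :=
  stmt_12_general p α hp hpq ρ β hρ hβ hρ1
end

section
/- Let p be an odd prime, q a prime power with p ∤ q, ρ = ord_p(q), β = ν_p(q^ρ - 1), and n = p^α. For each integer j with 1 ≤ j ≤ α - β, the number of monic irreducible factors of x^n - 1 over F_q of degree ρ·p^j equals (p^β - p^{β-1})/ρ = φ(p^β)/ρ. -/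
/-!
Over `𝔽_q` we have `X ^ p ^ α - 1 = ∏_{i ≤ α} Φ_{p^i}`, and every irreducible factor of `Φ_{p^i}`
has degree `ord_{p^i}(q)`, so `Φ_{p^i}` has `φ(p^i) / ord_{p^i}(q)` of them. Lifting the exponent
gives `ν_p(q^{ρ s} - 1) = β + ν_p(s)`, hence `ord_{p^i}(q) = ρ p^{i-β}` for `i ≥ 1`. So the factors
of degree `ρ p^j` are exactly those of `Φ_{p^{β+j}}`, and there are
`φ(p^{β+j}) / (ρ p^j) = φ(p^β) / ρ` of them.
-/

open Polynomial UniqueFactorizationMonoid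
open scoped Classical

theorem ZMod.natCast_pow_eq_one_iff_dvd {q : ℕ} (hq : q ≠ 0) (m e : ℕ) :
    (q : ZMod m) ^ e = 1 ↔ m ∣ q ^ e - 1 := by
  rw [← Nat.cast_pow, ← Nat.cast_one, ZMod.natCast_eq_natCast_iff, Nat.ModEq.comm,
    Nat.modEq_iff_dvd' (Nat.one_le_pow _ _ (Nat.pos_of_ne_zero hq))]

theorem orderOf_eq_of_forall_pow_eq_one_iff {M : Type*} [Monoid M] {x : M} {d : ℕ}
    (h : ∀ e : ℕ, x ^ e = 1 ↔ d ∣ e) : orderOf x = d :=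
  Nat.dvd_antisymm (orderOf_dvd_of_pow_eq_one ((h d).mpr dvd_rfl))
    ((h _).mp (pow_orderOf_eq_one x))

theorem dvd_pow_orderOf_natCast_zmod_sub_one {q : ℕ} (hq : q ≠ 0) (m : ℕ) :
    m ∣ q ^ orderOf (q : ZMod m) - 1 :=
  (ZMod.natCast_pow_eq_one_iff_dvd hq _ _).mp (pow_orderOf_eq_one _)

section LiftingTheExponent

variable {p q : ℕ} [hp : Fact p.Prime]

theorem orderOf_natCast_zmod_prime_ne_zero (hpq : ¬ p ∣ q) : orderOf (q : ZMod p) ≠ 0 := by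
  have hq : (q : ZMod p) ≠ 0 := by rwa [Ne, ZMod.natCast_eq_zero_iff]
  exact (isOfFinOrder_iff_pow_eq_one.mpr ⟨p - 1, Nat.sub_pos_of_lt hp.out.one_lt,
    ZMod.pow_card_sub_one_eq_one hq⟩).orderOf_pos.ne'

theorem padicValNat_pow_orderOf_sub_one_ne_zero (hq : 1 < q) (hpq : ¬ p ∣ q) :
    padicValNat p (q ^ orderOf (q : ZMod p) - 1) ≠ 0 := by
  have := Nat.one_lt_pow (orderOf_natCast_zmod_prime_ne_zero hpq) hq
  exact Nat.one_le_iff_ne_zero.mp <|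
    one_le_padicValNat_of_dvd (by omega) (dvd_pow_orderOf_natCast_zmod_sub_one (by omega) p)

theorem padicValNat_pow_orderOf_mul_sub_one (hodd : Odd p) (hq : 1 < q) (hpq : ¬ p ∣ q)
    {s : ℕ} (hs : s ≠ 0) :
    padicValNat p (q ^ (orderOf (q : ZMod p) * s) - 1) =
      padicValNat p (q ^ orderOf (q : ZMod p) - 1) + padicValNat p s := by
  simpa [pow_mul] using padicValNat.pow_sub_pow hodd (y := 1)
    (Nat.one_lt_pow (orderOf_natCast_zmod_prime_ne_zero hpq) hq)
    (by simpa using dvd_pow_orderOf_natCast_zmod_sub_one (by omega) p)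
    (fun h => hpq (hp.out.dvd_of_dvd_pow h)) hs

/-- For `i ≤ ν_p(q^ρ - 1)` the exponent truncates to `0`, and the order is `ρ`. -/
theorem orderOf_natCast_zmod_prime_pow (hodd : Odd p) (hq : 1 < q) (hpq : ¬ p ∣ q) {i : ℕ}
    (hi : i ≠ 0) :
    orderOf (q : ZMod (p ^ i)) = orderOf (q : ZMod p) *
      p ^ (i - padicValNat p (q ^ orderOf (q : ZMod p) - 1)) := by
  have hlte := fun {s : ℕ} (hs : s ≠ 0) => padicValNat_pow_orderOf_mul_sub_one hodd hq hpq hs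
  have hp0 : p ≠ 0 := hp.out.ne_zero
  set ρ := orderOf (q : ZMod p)
  set β := padicValNat p (q ^ ρ - 1)
  have hsub : ∀ {e}, e ≠ 0 → q ^ e - 1 ≠ 0 := fun he => by
    have := Nat.one_lt_pow he hq
    omega
  refine orderOf_eq_of_forall_pow_eq_one_iff fun e => ?_
  rw [ZMod.natCast_pow_eq_one_iff_dvd (by omega)]
  rcases eq_or_ne e 0 with rfl | he
  · simp
  constructor
  · intro h
    obtain ⟨s, rfl⟩ : ρ ∣ e := orderOf_dvd_of_pow_eq_one <|
      (ZMod.natCast_pow_eq_one_iff_dvd (by omega) _ _).mpr ((dvd_pow_self p hi).trans h)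
    have hs : s ≠ 0 := right_ne_zero_of_mul he
    rw [padicValNat_dvd_iff_le (hsub he), hlte hs] at h
    exact mul_dvd_mul_left ρ ((padicValNat_dvd_iff_le hs).mpr (by omega))
  · rintro ⟨t, rfl⟩
    have ht : t ≠ 0 := right_ne_zero_of_mul he
    rw [mul_assoc, padicValNat_dvd_iff_le (hsub (by simpa [mul_assoc] using he)),
      hlte (mul_ne_zero (pow_ne_zero _ hp0) ht), padicValNat.mul (pow_ne_zero _ hp0) ht,
      padicValNat.prime_pow]
    omega

theorem orderOf_natCast_zmod_prime_pow_eq_iff (hodd : Odd p) (hq : 1 < q) (hpq : ¬ p ∣ q)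
    {i j : ℕ} (hj : j ≠ 0) :
    orderOf (q : ZMod (p ^ i)) = orderOf (q : ZMod p) * p ^ j ↔
      i = padicValNat p (q ^ orderOf (q : ZMod p) - 1) + j := by
  have hpj : 1 < p ^ j := Nat.one_lt_pow hj hp.out.one_lt
  rcases eq_or_ne i 0 with rfl | hi
  · rw [pow_zero, orderOf_eq_one_iff.mpr (Subsingleton.elim _ _)]
    constructor
    · intro h
      have := Nat.eq_one_of_mul_eq_one_left h.symm
      omega
    · omega
  rw [orderOf_natCast_zmod_prime_pow hodd hq hpq hi,
    mul_right_inj' (orderOf_natCast_zmod_prime_ne_zero hpq),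
    (Nat.pow_right_injective hp.out.two_le).eq_iff]
  omega

end LiftingTheExponent

theorem Nat.totient_prime_pow_add {p : ℕ} (hp : p.Prime) {β : ℕ} (hβ : β ≠ 0) (j : ℕ) :
    (p ^ (β + j)).totient = (p ^ β).totient * p ^ j := by
  rw [Nat.totient_prime_pow hp (by omega), Nat.totient_prime_pow hp (by omega),
    show β + j - 1 = β - 1 + j by omega, pow_add]
  ring

theorem Nat.totient_prime_pow_eq_sub {p : ℕ} (hp : p.Prime) {β : ℕ} (hβ : β ≠ 0) :
    (p ^ β).totient = p ^ β - p ^ (β - 1) := by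
  rw [Nat.totient_prime_pow hp (Nat.pos_of_ne_zero hβ), Nat.mul_sub_one, ← pow_succ,
    Nat.sub_add_cancel (Nat.one_le_iff_ne_zero.mpr hβ)]

theorem Multiset.card_filter_finsetSum {ι α : Type*} (p : α → Prop) [DecidablePred p]
    (s : Finset ι) (m : ι → Multiset α) :
    card ((∑ i ∈ s, m i).filter p) = ∑ i ∈ s, card ((m i).filter p) := by
  simp only [← Multiset.countP_eq_card_filter]
  exact map_sum (Multiset.countPAddMonoidHom p) m s

namespace Polynomial

theorem X_pow_prime_pow_sub_one_eq_prod_cyclotomic (R : Type*) [CommRing R] {p : ℕ}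
    (hp : p.Prime) (α : ℕ) :
    (X ^ p ^ α - 1 : R[X]) = ∏ i ∈ Finset.range (α + 1), cyclotomic (p ^ i) R := by
  rw [← prod_cyclotomic_eq_X_pow_sub_one (pow_pos hp.pos α), Nat.divisors_prime_pow hp,
    Finset.prod_map]
  rfl

theorem normalizedFactors_X_pow_prime_pow_sub_one (K : Type*) [Field K] [DecidableEq K] {p : ℕ}
    (hp : p.Prime) (α : ℕ) :
    normalizedFactors (X ^ p ^ α - 1 : K[X]) =
      ∑ i ∈ Finset.range (α + 1), normalizedFactors (cyclotomic (p ^ i) K) := by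
  rw [X_pow_prime_pow_sub_one_eq_prod_cyclotomic K hp, Finset.prod_eq_multiset_prod,
    normalizedFactors_multiset_prod _
      (by simp [(cyclotomic_ne_zero _ K).symm, cyclotomic_ne_zero]),
    Multiset.map_map]
  rfl

variable {K : Type*} [Field K] [Fintype K] [DecidableEq K] {n : ℕ}

theorem natDegree_of_mem_normalizedFactors_cyclotomic_of_coprime
    (hn : (Fintype.card K).Coprime n) {P : K[X]} (hP : P ∈ normalizedFactors (cyclotomic n K)) :
    P.natDegree = orderOf (Fintype.card K : ZMod n) := by
  obtain ⟨f, hchar, hcard⟩ := FiniteField.card K (ringChar K)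
  have : Fact (ringChar K).Prime := ⟨hchar⟩
  have hn' : (ringChar K).Coprime n :=
    Nat.Coprime.coprime_dvd_left (hcard ▸ dvd_pow_self _ f.ne_zero) hn
  rw [natDegree_of_mem_normalizedFactors_cyclotomic hcard hn' hP, ← orderOf_units,
    ZMod.coe_unitOfCoprime, hcard]

theorem card_normalizedFactors_cyclotomic_of_coprime (hn : (Fintype.card K).Coprime n) :
    Multiset.card (normalizedFactors (cyclotomic n K)) =
      n.totient / orderOf (Fintype.card K : ZMod n) := by
  obtain ⟨f, hchar, hcard⟩ := FiniteField.card K (ringChar K)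
  have : Fact (ringChar K).Prime := ⟨hchar⟩
  have hn' : (ringChar K).Coprime n :=
    Nat.Coprime.coprime_dvd_left (hcard ▸ dvd_pow_self _ f.ne_zero) hn
  have : NeZero (n : K) := ⟨fun h => hchar.one_lt.ne' <| Nat.Coprime.eq_one_of_dvd hn'
    ((CharP.cast_eq_zero_iff K (ringChar K) n).mp h)⟩
  have hnodup := (squarefree_iff_nodup_normalizedFactors (cyclotomic_ne_zero n K)).mp
    (squarefree_cyclotomic n K)
  rw [← Multiset.toFinset_card_of_nodup hnodup, normalizedFactors_cyclotomic_card hcard hn',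
    ← orderOf_units, ZMod.coe_unitOfCoprime, hcard]

theorem card_filter_natDegree_normalizedFactors_cyclotomic (hn : (Fintype.card K).Coprime n)
    (d : ℕ) :
    Multiset.card ((normalizedFactors (cyclotomic n K)).filter (fun P => P.natDegree = d)) =
      if orderOf (Fintype.card K : ZMod n) = d then n.totient / d else 0 := by
  split_ifs with h
  · rw [Multiset.filter_eq_self.mpr fun P hP =>
      (natDegree_of_mem_normalizedFactors_cyclotomic_of_coprime hn hP).trans h,
      card_normalizedFactors_cyclotomic_of_coprime hn, h]
  · rw [Multiset.filter_eq_nil.mpr fun P hP =>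
      (natDegree_of_mem_normalizedFactors_cyclotomic_of_coprime hn hP).trans_ne h,
      Multiset.card_zero]

end Polynomial

theorem stmt_13 {F : Type*} [Field F] [Fintype F] [DecidableEq F]
    (p α : ℕ) (hp : p.Prime) (hodd : Odd p)
    (hpq : ¬ p ∣ Fintype.card F) (ρ β : ℕ)
    (hρ : ρ = orderOf ((Fintype.card F : ZMod p)))
    (hβ : β = padicValNat p ((Fintype.card F) ^ ρ - 1)) :
    ∀ j : ℕ, 1 ≤ j → j ≤ α - β →
      Multiset.card ((normalizedFactors (X ^ (p ^ α) - 1 : F[X])).filter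
          (fun P => P.natDegree = ρ * p ^ j))
        = (p ^ β - p ^ (β - 1)) / ρ := by
  intro j hj hjα
  subst hρ hβ
  have : Fact p.Prime := ⟨hp⟩
  have hq : 1 < Fintype.card F := Fintype.one_lt_card
  have hcop (i : ℕ) : (Fintype.card F).Coprime (p ^ i) :=
    (Nat.coprime_comm.mp (hp.coprime_iff_not_dvd.mpr hpq)).pow_right i
  have hβ0 := padicValNat_pow_orderOf_sub_one_ne_zero hq hpq
  simp only [normalizedFactors_X_pow_prime_pow_sub_one F hp, Multiset.card_filter_finsetSum,
    card_filter_natDegree_normalizedFactors_cyclotomic (hcop _),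
    orderOf_natCast_zmod_prime_pow_eq_iff hodd hq hpq (by omega : j ≠ 0),
    Finset.sum_ite_eq', Finset.mem_range]
  rw [if_pos (by omega), Nat.totient_prime_pow_add hp hβ0,
    Nat.mul_div_mul_right _ _ (pow_pos hp.pos j), Nat.totient_prime_pow_eq_sub hp hβ0]
end

section
/- Let n = p_1^{α_1} ··· p_l^{α_l} and q a prime power with gcd(n, q) = 1. Set ρ_i = ord_{p_i}(q) and suppose the pair (n, q) satisfies the homogeneous order condition: gcd(ρ_i, n) = 1 for every i, and there is ρ with gcd(ρ_i, ρ_j) = ρ for all i ≠ j. Then lcm(ρ_1, ..., ρ_l) = (ρ_1 ρ_2 ··· ρ_l)/ρ^{l-1}. -/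
lemma gcd_lcm_distrib_aux (a b c : ℕ) (ha : a ≠ 0) (hb : b ≠ 0) (hc : c ≠ 0) :
    Nat.gcd a (Nat.lcm b c) = Nat.lcm (Nat.gcd a b) (Nat.gcd a c) := by
  have hlcm : Nat.lcm b c ≠ 0 := Nat.lcm_ne_zero hb hc
  have hab : Nat.gcd a b ≠ 0 := Nat.gcd_ne_zero_left ha
  have hac : Nat.gcd a c ≠ 0 := Nat.gcd_ne_zero_left ha
  apply Nat.eq_of_factorization_eq (Nat.gcd_ne_zero_left ha) (Nat.lcm_ne_zero hab hac)
  intro r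
  rw [Nat.factorization_gcd ha hlcm, Nat.factorization_lcm hb hc,
    Nat.factorization_lcm hab hac, Nat.factorization_gcd ha hb, Nat.factorization_gcd ha hc]
  simp only [Finsupp.inf_apply, Finsupp.sup_apply]
  exact inf_sup_left _ _ _

lemma gcd_lcm_const {ι : Type*} [DecidableEq ι] (ρ a : ℕ) (s : Finset ι) (f : ι → ℕ)
    (hs : s.Nonempty) (hf : ∀ i ∈ s, f i ≠ 0) (ha : a ≠ 0)
    (h : ∀ i ∈ s, Nat.gcd a (f i) = ρ) : Nat.gcd a (s.lcm f) = ρ := by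
  induction hs using Finset.Nonempty.cons_induction with
  | singleton i => simpa using h i (by simp)
  | cons i s hi hs ih =>
      have hmemi : i ∈ Finset.cons i s hi := by simp
      rw [Finset.cons_eq_insert, Finset.lcm_insert]
      have hL : s.lcm f ≠ 0 := by
        intro h0
        rw [Finset.lcm_eq_zero_iff] at h0
        obtain ⟨x, hx, hfx⟩ := h0
        exact hf x (Finset.mem_cons_of_mem hx) hfx
      rw [lcm_eq_nat_lcm,
        gcd_lcm_distrib_aux a (f i) (s.lcm f) ha (hf i hmemi) hL,
        h i hmemi,
        ih (fun j hj => hf j (Finset.mem_cons_of_mem hj))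
          (fun j hj => h j (Finset.mem_cons_of_mem hj))]
      simp [Nat.lcm_self]

lemma lcm_mul_pow_eq_prod {ι : Type*} [DecidableEq ι] (ρ : ℕ) (s : Finset ι) (f : ι → ℕ)
    (hs : s.Nonempty) (hf : ∀ i ∈ s, f i ≠ 0)
    (h : ∀ i ∈ s, ∀ j ∈ s, i ≠ j → Nat.gcd (f i) (f j) = ρ) :
    s.lcm f * ρ ^ (s.card - 1) = ∏ i ∈ s, f i := by
  induction hs using Finset.Nonempty.cons_induction with
  | singleton i => simp
  | cons i s hi hs ih =>
      have hmemi : i ∈ Finset.cons i s hi := by simp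
      have hL : s.lcm f ≠ 0 := by
        intro h0
        rw [Finset.lcm_eq_zero_iff] at h0
        obtain ⟨x, hx, hfx⟩ := h0
        exact hf x (Finset.mem_cons_of_mem hx) hfx
      have hgcd : Nat.gcd (f i) (s.lcm f) = ρ := by
        apply gcd_lcm_const ρ (f i) s f hs (fun j hj => hf j (Finset.mem_cons_of_mem hj))
          (hf i hmemi)
        intro j hj
        exact h i hmemi j (Finset.mem_cons_of_mem hj) (by rintro rfl; exact hi hj)
      have key : Nat.lcm (f i) (s.lcm f) * ρ = f i * s.lcm f := by
        rw [← hgcd, Nat.mul_comm, Nat.gcd_mul_lcm]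
      have hcard2 : (insert i s).card - 1 = (s.card - 1) + 1 := by
        rw [Finset.card_insert_of_notMem hi]
        have := hs.card_pos
        omega
      rw [Finset.cons_eq_insert, Finset.lcm_insert, Finset.prod_insert hi, hcard2, pow_succ,
        lcm_eq_nat_lcm,
        ← mul_assoc, mul_comm (Nat.lcm (f i) (s.lcm f)) (ρ ^ (s.card - 1)), mul_assoc,
        key, ← mul_assoc, mul_comm (ρ ^ (s.card - 1)) (f i), mul_assoc, mul_comm (ρ ^ (s.card - 1)) (s.lcm f),
        ih (fun j hj => hf j (Finset.mem_cons_of_mem hj))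
          (fun j hj k hk hjk => h j (Finset.mem_cons_of_mem hj) k (Finset.mem_cons_of_mem hk) hjk)]

theorem stmt_15 (l : ℕ) (p α : Fin l → ℕ) (q n : ℕ)
    (hq : ∃ r k : ℕ, r.Prime ∧ 0 < k ∧ q = r ^ k)
    (hp : ∀ i, (p i).Prime) (hα : ∀ i, 0 < α i) (hinj : Function.Injective p)
    (hn : n = ∏ i, p i ^ α i) (hcop : Nat.Coprime n q)
    (ρv : Fin l → ℕ) (hρv : ∀ i, ρv i = orderOf ((q : ZMod (p i))))
    (ρ : ℕ)
    (hoc1 : ∀ i, Nat.Coprime (ρv i) n)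
    (hoc2 : ∀ i j, i ≠ j → Nat.gcd (ρv i) (ρv j) = ρ) :
    Finset.univ.lcm ρv = (∏ i, ρv i) / ρ ^ (l - 1) := by
  rcases Nat.eq_zero_or_pos l with hl | hl
  · subst hl
    simp
  have hρ0 : ∀ i, ρv i ≠ 0 := by
    intro i hzero
    have h1 := hoc1 i
    rw [hzero] at h1
    have hn1 : n = 1 := by simpa [Nat.Coprime] using h1
    have hdvd : p i ^ α i ∣ n := hn ▸ Finset.dvd_prod_of_mem _ (Finset.mem_univ i)
    rw [hn1] at hdvd
    have hle := Nat.le_of_dvd one_pos hdvd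
    have h2 : 2 ≤ p i ^ α i :=
      le_trans (hp i).two_le (Nat.le_self_pow (hα i).ne' (p i))
    omega
  have hρpow : 0 < ρ ^ (l - 1) := by
    rcases Nat.lt_or_ge l 2 with h2 | h2
    · have h10 : l - 1 = 0 := by omega
      simp [h10]
    · have hij : (⟨0, by omega⟩ : Fin l) ≠ ⟨1, by omega⟩ := by
        simp [Fin.ext_iff]
      have hg := hoc2 _ _ hij
      have hρne : ρ ≠ 0 := by
        rintro rfl
        exact hρ0 _ (Nat.eq_zero_of_gcd_eq_zero_left hg)
      positivity
  have hne : (Finset.univ : Finset (Fin l)).Nonempty := ⟨⟨0, hl⟩, Finset.mem_univ _⟩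
  have key := lcm_mul_pow_eq_prod ρ Finset.univ ρv hne (fun i _ => hρ0 i)
    (fun i _ j _ hij => hoc2 i j hij)
  rw [Finset.card_univ, Fintype.card_fin] at key
  rw [← key, Nat.mul_div_cancel _ hρpow]
end
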